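/- arXiv:2410.05223 — 7 statements merged into one kernel-verified Lean document; each statement's English description precedes it below -/
import Mathlib

section
/- Let (F_n) be an integer sequence satisfying F_n = p F_{n-1} - q^2 F_{n-2} for n ≥ 2, where p, q are coprime positive integers. Let r be a prime dividing q and let ν_r denote the r-adic valuation. If ν_r(F_n) ≤ ν_r(F_{n-1}) for some n ≥ 1, then ν_r(F_{n+k}) = ν_r(F_n) for all k ≥ 0. -/
private lemma sub_val_eq {r : ℕ} (hr : r.Prime) {a b : ℤ} (ha : a ≠ 0) (hb : b ≠ 0)
    (h : padicValInt r a < padicValInt r b) :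
    a - b ≠ 0 ∧ padicValInt r (a - b) = padicValInt r a := by
  haveI : Fact r.Prime := ⟨hr⟩
  have hne : a - b ≠ 0 := by
    intro hzero
    have : a = b := by linarith [sub_eq_zero.mp hzero]
    rw [this] at h; exact lt_irrefl _ h
  refine ⟨hne, ?_⟩
  have hQ : ((a : ℚ) + (-(b : ℚ))) ≠ 0 := by
    have h2 : ((a - b : ℤ) : ℚ) ≠ 0 := Int.cast_ne_zero.mpr hne
    push_cast at h2
    rwa [sub_eq_add_neg] at h2
  have hval : padicValRat r (a : ℚ) < padicValRat r (-(b : ℚ)) := by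
    rw [padicValRat.neg]
    rw [padicValRat.of_int, padicValRat.of_int]
    exact_mod_cast h
  have := padicValRat.add_eq_of_lt (p := r) hQ (Int.cast_ne_zero.mpr ha)
    (neg_ne_zero.mpr (Int.cast_ne_zero.mpr hb)) hval
  have heq : ((a : ℚ) + (-(b : ℚ))) = ((a - b : ℤ) : ℚ) := by push_cast; ring
  rw [heq, padicValRat.of_int, padicValRat.of_int] at this
  exact_mod_cast this

/-- For an integer sequence with `F_{n+2} = p F_{n+1} - q² F_n`, `gcd(p,q)=1`,
and a prime `r` dividing `q`: if the `r`-adic valuation satisfies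
`ν_r(F_{n+1}) ≤ ν_r(F_n)` (with both terms nonzero), then
`ν_r(F_{n+1+k}) = ν_r(F_{n+1})` for all `k ≥ 0`. -/
theorem stmt_5 (p q : ℕ) (hp : 0 < p) (hq : 0 < q) (hcop : Nat.Coprime p q)
    (F : ℕ → ℤ) (hrec : ∀ m, F (m + 2) = (p : ℤ) * F (m + 1) - (q : ℤ) ^ 2 * F m)
    (r : ℕ) (hr : r.Prime) (hrq : r ∣ q) (n : ℕ)
    (hFn : F n ≠ 0) (hFn1 : F (n + 1) ≠ 0)
    (hval : padicValInt r (F (n + 1)) ≤ padicValInt r (F n)) :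
    ∀ k : ℕ, padicValInt r (F (n + 1 + k)) = padicValInt r (F (n + 1)) := by
  haveI : Fact r.Prime := ⟨hr⟩
  have hrp : ¬ (r : ℤ) ∣ (p : ℤ) := by
    intro h
    have : r ∣ p := Int.ofNat_dvd.mp h
    have : r ∣ Nat.gcd p q := Nat.dvd_gcd this hrq
    rw [hcop] at this
    exact hr.one_lt.ne' (Nat.eq_one_of_dvd_one this ▸ rfl)
  have hvp : padicValInt r (p : ℤ) = 0 := padicValInt.eq_zero_of_not_dvd hrp
  have hqz : (q : ℤ) ≠ 0 := Int.ofNat_ne_zero.mpr hq.ne'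
  have hvq : 1 ≤ padicValInt r (q : ℤ) := by
    rw [show ((q:ℕ):ℤ) = ((q:ℕ):ℤ) from rfl, padicValInt.of_nat]
    exact one_le_padicValNat_of_dvd hq.ne' hrq
  -- main invariant by induction
  suffices H : ∀ k : ℕ, F (n + k) ≠ 0 ∧ F (n + 1 + k) ≠ 0 ∧
      padicValInt r (F (n + 1 + k)) ≤ padicValInt r (F (n + k)) ∧
      padicValInt r (F (n + 1 + k)) = padicValInt r (F (n + 1)) by
    exact fun k => (H k).2.2.2
  intro k
  induction k with
  | zero => exact ⟨hFn, hFn1, hval, rfl⟩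
  | succ k ih =>
    obtain ⟨h0, h1, hle, heq⟩ := ih
    have hrecn : F (n + 1 + (k + 1)) = (p : ℤ) * F (n + 1 + k) - (q : ℤ) ^ 2 * F (n + k) := by
      have := hrec (n + k)
      rw [show n + 1 + (k + 1) = n + k + 2 from by omega, show n + 1 + k = n + k + 1 from by omega]
      exact this
    have hpz : (p : ℤ) ≠ 0 := Int.ofNat_ne_zero.mpr hp.ne'
    have ha : (p : ℤ) * F (n + 1 + k) ≠ 0 := mul_ne_zero hpz h1
    have hb : (q : ℤ) ^ 2 * F (n + k) ≠ 0 := mul_ne_zero (pow_ne_zero 2 hqz) h0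
    have hva : padicValInt r ((p : ℤ) * F (n + 1 + k)) = padicValInt r (F (n + 1 + k)) := by
      rw [padicValInt.mul hpz h1, hvp, zero_add]
    have hvb : padicValInt r ((q : ℤ) ^ 2 * F (n + k)) =
        2 * padicValInt r (q : ℤ) + padicValInt r (F (n + k)) := by
      rw [padicValInt.mul (pow_ne_zero 2 hqz) h0]
      congr 1
      rw [sq, padicValInt.mul hqz hqz]
      ring
    have hlt : padicValInt r ((p : ℤ) * F (n + 1 + k)) <
        padicValInt r ((q : ℤ) ^ 2 * F (n + k)) := by
      rw [hva, hvb]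
      omega
    obtain ⟨hne, hvv⟩ := sub_val_eq hr ha hb hlt
    rw [← hrecn] at hne hvv
    rw [hva] at hvv
    rw [show n + (k + 1) = n + 1 + k from by omega]
    exact ⟨h1, hne, le_of_eq hvv, hvv.trans heq⟩
end

section
/- Let p, q be coprime positive integers and let (F_n), (G_n) be integer sequences both satisfying X_n = p X_{n-1} - q^2 X_{n-2} for n ≥ 2, with F_0 G_1 - F_1 G_0 ≠ 0. Then for all n ≥ 1, gcd(F_n, G_n) divides p^n * (F_0 G_1 - F_1 G_0). -/
private def auxU (p q : ℕ) : ℕ → ℤ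
  | 0 => 0
  | 1 => 1
  | (m+2) => (p : ℤ) * auxU p q (m+1) - (q : ℤ)^2 * auxU p q m

private lemma two_step {P : ℕ → Prop} (h0 : P 0) (h1 : P 1)
    (ih : ∀ n, P n → P (n+1) → P (n+2)) : ∀ n, P n := by
  have key : ∀ n, P n ∧ P (n+1) := by
    intro n
    induction n with
    | zero => exact ⟨h0, h1⟩
    | succ k hk => exact ⟨hk.2, ih k hk.1 hk.2⟩
  exact fun n => (key n).1

private lemma auxU_mod (p q : ℕ) : ∀ n, ∃ k : ℤ, auxU p q (n+1) = (p:ℤ)^n + (q:ℤ) * k := by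
  refine two_step ⟨0, by simp [auxU]⟩ ⟨0, by simp [auxU]⟩ ?_
  rintro n ⟨k, hk⟩ ⟨l, hl⟩
  refine ⟨p * l - q * auxU p q (n+1), ?_⟩
  show (p : ℤ) * auxU p q (n+2) - (q : ℤ)^2 * auxU p q (n+1) = _
  rw [hl]
  ring

private lemma auxU_coprime_q (p q : ℕ) (hcop : Nat.Coprime p q) (n : ℕ) :
    IsCoprime (auxU p q (n+1)) (q : ℤ) := by
  obtain ⟨k, hk⟩ := auxU_mod p q n
  rw [hk]
  exact (((Int.isCoprime_iff_gcd_eq_one).2 (by simpa using hcop)).pow_left).add_mul_left_left k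

private lemma auxU_cassini (p q : ℕ) : ∀ n,
    auxU p q (n+1) ^ 2 - auxU p q (n+2) * auxU p q n = (q:ℤ)^(2*n) := by
  intro n
  induction n with
  | zero => simp [auxU]
  | succ m ih =>
      have h2 : auxU p q (m+2) = (p : ℤ) * auxU p q (m+1) - (q : ℤ)^2 * auxU p q m := rfl
      have h3 : auxU p q (m+3) = (p : ℤ) * auxU p q (m+2) - (q : ℤ)^2 * auxU p q (m+1) := rfl
      have key : auxU p q (m+2) ^ 2 - auxU p q (m+3) * auxU p q (m+1)
          = (q:ℤ)^2 * (auxU p q (m+1) ^ 2 - auxU p q (m+2) * auxU p q m) := by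
        rw [h3, h2]; ring
      rw [key, ih]
      ring

private lemma auxU_coprime_succ (p q : ℕ) (hcop : Nat.Coprime p q) (n : ℕ) :
    IsCoprime (auxU p q (n+1)) (auxU p q n) := by
  obtain ⟨x, y, hxy⟩ := (auxU_coprime_q p q hcop n).pow_right (n := 2*n)
  refine ⟨x + y * auxU p q (n+1), -(y * auxU p q (n+2)), ?_⟩
  linear_combination hxy + y * auxU_cassini p q n

/-- For integer sequences `F, G` both satisfying `X_{n+2} = p X_{n+1} - q² X_n`
with `F_0 G_1 - F_1 G_0 ≠ 0`, for all `n ≥ 1`,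
`gcd(F_n, G_n)` divides `p^n * (F_0 G_1 - F_1 G_0)`. -/
theorem stmt_7 (p q : ℕ) (hp : 0 < p) (hq : 0 < q) (hcop : Nat.Coprime p q)
    (F G : ℕ → ℤ)
    (hrecF : ∀ m, F (m + 2) = (p : ℤ) * F (m + 1) - (q : ℤ) ^ 2 * F m)
    (hrecG : ∀ m, G (m + 2) = (p : ℤ) * G (m + 1) - (q : ℤ) ^ 2 * G m)
    (hinit : F 0 * G 1 - F 1 * G 0 ≠ 0) :
    ∀ n : ℕ, 1 ≤ n →
      (Int.gcd (F n) (G n) : ℤ) ∣ (p : ℤ) ^ n * (F 0 * G 1 - F 1 * G 0) := by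
  set D : ℤ := F 0 * G 1 - F 1 * G 0 with hD
  set U : ℕ → ℤ := auxU p q with hU
  have hU0 : U 0 = 0 := rfl
  have hU1 : U 1 = 1 := rfl
  have hU2 : ∀ m, U (m+2) = (p : ℤ) * U (m+1) - (q : ℤ)^2 * U m := fun m => rfl
  -- identity R : F 0 * G m - G 0 * F m = D * U m
  have R : ∀ m, F 0 * G m - G 0 * F m = D * U m := by
    refine two_step (by rw [hU0]; ring) (by rw [hU1, hD]; ring) ?_
    intro m h1 h2
    rw [hrecF m, hrecG m, hU2 m]
    linear_combination (p : ℤ) * h2 - (q : ℤ)^2 * h1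
  -- identity Q : F 1 * G (m+1) - G 1 * F (m+1) = D * (q² * U m)
  have Q : ∀ m, F 1 * G (m+1) - G 1 * F (m+1) = D * ((q:ℤ)^2 * U m) := by
    refine two_step (by rw [hU0]; ring) ?_ ?_
    · show F 1 * G 2 - G 1 * F 2 = _
      rw [hrecF 0, hrecG 0, hU1, hD]; ring
    · intro m h1 h2
      show F 1 * G (m+3) - G 1 * F (m+3) = _
      rw [hrecF (m+1), hrecG (m+1), hU2 m]
      linear_combination (p : ℤ) * h2 - (q : ℤ)^2 * h1
  rintro n hn
  obtain ⟨m, rfl⟩ : ∃ m, n = m + 1 := ⟨n - 1, (Nat.succ_pred_eq_of_pos hn).symm⟩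
  set d : ℤ := (Int.gcd (F (m+1)) (G (m+1)) : ℤ) with hd
  have hdF : d ∣ F (m+1) := Int.gcd_dvd_left _ _
  have hdG : d ∣ G (m+1) := Int.gcd_dvd_right _ _
  have h1 : d ∣ D * U (m+1) := by
    rw [← R (m+1)]
    exact dvd_sub (hdG.mul_left _) (hdF.mul_left _)
  have h2 : d ∣ D * ((q:ℤ)^2 * U m) := by
    rw [← Q m]
    exact dvd_sub (hdG.mul_left _) (hdF.mul_left _)
  have hcopU : IsCoprime (U (m+1)) ((q:ℤ)^2 * U m) :=
    ((auxU_coprime_q p q hcop m).pow_right).mul_right (auxU_coprime_succ p q hcop m)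
  obtain ⟨x, y, hxy⟩ := hcopU
  have hdD : d ∣ D := by
    have key : D = x * (D * U (m+1)) + y * (D * ((q:ℤ)^2 * U m)) := by
      linear_combination -D * hxy
    rw [key]
    exact dvd_add (h1.mul_left x) (h2.mul_left y)
  exact hdD.mul_left _
end

section
/- Let p, q be coprime positive integers with q ≥ 2, and let (F_n), (G_n) be rational sequences satisfying X_n = (p/q) X_{n-1} - X_{n-2}, with F_0 G_1 - F_1 G_0 ≠ 0. Writing F_n = f_n/f_n' and G_n = g_n/g_n' in lowest terms, the sequence gcd(f_n, g_n) is bounded. -/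
/-! Auxiliary lemmas for `stmt_8`. -/

private lemma qrs_den_cast_mul_self (x : ℚ) : (x.den : ℚ) * x = x.num := by
  have hd : (x.den : ℚ) ≠ 0 := by exact_mod_cast x.den_nz
  rw [mul_comm, eq_comm, ← div_eq_iff hd, Rat.num_div_den]

private lemma qrs_neg_val_not_dvd (r : ℕ) [Fact r.Prime] (x : ℚ) (_hx : x ≠ 0)
    (hv : padicValRat r x < 0) : ¬ ((r : ℤ) ∣ x.num) := by

  intro hdvd
  have hred : Nat.Coprime x.num.natAbs x.den := x.reduced
  have hdvd' : r ∣ x.num.natAbs := by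
    have := Int.natAbs_dvd_natAbs.mpr hdvd
    simpa using this
  have hnd : ¬ r ∣ x.den := fun hd =>
    (Fact.out : r.Prime).one_lt.ne' (Nat.eq_one_of_dvd_coprimes hred hdvd' hd)
  have hden : padicValNat r x.den = 0 := padicValNat.eq_zero_of_not_dvd hnd
  rw [padicValRat, hden] at hv
  have : (0:ℤ) ≤ padicValInt r x.num := Int.natCast_nonneg _
  omega

/-- Descent predicate for the valuation dynamics. -/
private def QrsP (r : ℕ) (c : ℚ) (H : ℕ → ℚ) (n : ℕ) : Prop :=
  H (n+1) ≠ 0 ∧ (H n = 0 ∨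
    padicValRat r (H (n+1)) + padicValRat r c < padicValRat r (H n))

private lemma qrs_descent (r : ℕ) [Fact r.Prime] (c : ℚ)
    (hc0 : c ≠ 0) (hvc : padicValRat r c < 0)
    (H : ℕ → ℚ) (hrec : ∀ n, H (n+2) = c * H (n+1) - H n)
    (n : ℕ) (hP : QrsP r c H n) :
    QrsP r c H (n+1) ∧
      padicValRat r (H (n+2)) = padicValRat r (H (n+1)) + padicValRat r c := by
  obtain ⟨h1, h2⟩ := hP
  have ha0 : c * H (n+1) ≠ 0 := mul_ne_zero hc0 h1
  have hva : padicValRat r (c * H (n+1)) = padicValRat r c + padicValRat r (H (n+1)) :=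
    padicValRat.mul hc0 h1
  by_cases hz : H n = 0
  · have he : H (n+2) = c * H (n+1) := by rw [hrec n, hz, sub_zero]
    have hne : H (n+2) ≠ 0 := he ▸ ha0
    have hval : padicValRat r (H (n+2)) = padicValRat r (H (n+1)) + padicValRat r c := by
      rw [he, hva, add_comm]
    exact ⟨⟨hne, Or.inr (by rw [hval]; linarith)⟩, hval⟩
  · have hlt : padicValRat r (H (n+1)) + padicValRat r c < padicValRat r (H n) :=
      h2.resolve_left hz
    have hlt' : padicValRat r (c * H (n+1)) < padicValRat r (-(H n)) := by
      rw [hva, padicValRat.neg]; linarith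
    have he : H (n+2) = c * H (n+1) + -(H n) := by rw [hrec n, sub_eq_add_neg]
    have hne : c * H (n+1) + -(H n) ≠ 0 := by
      intro h0
      have : c * H (n+1) = H n := by linarith [add_eq_zero_iff_eq_neg.mp h0]
      rw [this] at hlt'
      rw [padicValRat.neg] at hlt'
      exact lt_irrefl _ hlt'
    have hval : padicValRat r (H (n+2)) = padicValRat r (H (n+1)) + padicValRat r c := by
      rw [he, padicValRat.add_eq_of_lt hne ha0 (neg_ne_zero.mpr hz) hlt', hva, add_comm]
    exact ⟨⟨he ▸ hne, Or.inr (by rw [hval]; linarith)⟩, hval⟩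

private lemma qrs_descent_iter (r : ℕ) [Fact r.Prime] (c : ℚ)
    (hc0 : c ≠ 0) (hvc : padicValRat r c < 0)
    (H : ℕ → ℚ) (hrec : ∀ n, H (n+2) = c * H (n+1) - H n)
    (n₀ : ℕ) (hP : QrsP r c H n₀) : ∀ k : ℕ,
    QrsP r c H (n₀ + k) ∧
      padicValRat r (H (n₀ + 1 + k)) = padicValRat r (H (n₀ + 1)) + k * padicValRat r c := by
  intro k
  induction k with
  | zero => simpa using hP
  | succ k ih =>
    obtain ⟨hPk, hvk⟩ := ih
    obtain ⟨hPk1, hvk1⟩ := qrs_descent r c hc0 hvc H hrec (n₀ + k) hPk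
    constructor
    · exact (by rw [show n₀ + (k+1) = n₀ + k + 1 from rfl]; exact hPk1)
    · have : n₀ + 1 + (k + 1) = (n₀ + k) + 2 := by ring
      rw [this, hvk1, show n₀ + k + 1 = n₀ + 1 + k from by ring, hvk]
      push_cast
      ring

private lemma qrs_eventually (r : ℕ) [Fact r.Prime] (c : ℚ)
    (hc0 : c ≠ 0) (hvc : padicValRat r c < 0)
    (H : ℕ → ℚ) (hrec : ∀ n, H (n+2) = c * H (n+1) - H n)
    (n₀ : ℕ) (hP : QrsP r c H n₀) :
    ∃ N, ∀ n ≥ N, ¬ ((r : ℤ) ∣ (H n).num) := by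
  have hiter := qrs_descent_iter r c hc0 hvc H hrec n₀ hP
  refine ⟨n₀ + 1 + ((padicValRat r (H (n₀ + 1))).toNat + 1), fun n hn => ?_⟩
  obtain ⟨k, rfl⟩ : ∃ k, n = n₀ + 1 + k := ⟨n - (n₀+1), by omega⟩
  have hk : (padicValRat r (H (n₀ + 1))).toNat + 1 ≤ k := by omega
  obtain ⟨hPk, hvk⟩ := hiter k
  have hne : H (n₀ + 1 + k) ≠ 0 := by
    have := hPk.1
    rwa [show n₀ + k + 1 = n₀ + 1 + k from by ring] at this
  have hvcle : padicValRat r c ≤ -1 := by omega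
  have hkv : (k : ℤ) * padicValRat r c ≤ -(k : ℤ) := by
    calc (k:ℤ) * padicValRat r c ≤ (k:ℤ) * (-1) :=
          mul_le_mul_of_nonneg_left hvcle (by positivity)
      _ = -(k:ℤ) := by ring
  have hlek : padicValRat r (H (n₀ + 1)) < (k : ℤ) := by
    have h1 : padicValRat r (H (n₀ + 1)) ≤ (padicValRat r (H (n₀ + 1))).toNat :=
      Int.self_le_toNat _
    have h2 : ((padicValRat r (H (n₀ + 1))).toNat : ℤ) < k := by exact_mod_cast hk
    omega
  have : padicValRat r (H (n₀ + 1 + k)) < 0 := by rw [hvk]; omega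
  exact qrs_neg_val_not_dvd r _ hne this

private lemma qrs_growth (r : ℕ) [Fact r.Prime] (c : ℚ) (hvc : padicValRat r c < 0)
    (H : ℕ → ℚ) (hnP : ∀ n, ¬ QrsP r c H n)
    (hnz : ∀ n, ¬ (H n = 0 ∧ H (n+1) = 0)) :
    (∀ n, H n ≠ 0) ∧ ∀ n : ℕ, padicValRat r (H 0) + n ≤ padicValRat r (H n) := by
  have hne : ∀ n, H n ≠ 0 := by
    intro n hn
    match n with
    | 0 =>
      have h1 : H 1 ≠ 0 := fun h1 => hnz 0 ⟨hn, h1⟩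
      exact hnP 0 ⟨h1, Or.inl hn⟩
    | (m+1) =>
      have h2 : H (m+2) ≠ 0 := fun h2 => hnz (m+1) ⟨hn, h2⟩
      exact hnP (m+1) ⟨h2, Or.inl hn⟩
  refine ⟨hne, ?_⟩
  have step : ∀ n, padicValRat r (H n) + 1 ≤ padicValRat r (H (n+1)) := by
    intro n
    have := hnP n
    rw [QrsP] at this
    push_neg at this
    have h2 := (this (hne (n+1))).2
    omega
  intro n
  induction n with
  | zero => simp
  | succ n ih =>
    have := step n
    push_cast
    push_cast at ih
    omega

private lemma qrs_wronskian (c : ℚ) (F G : ℕ → ℚ)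
    (hF : ∀ n, F (n+2) = c * F (n+1) - F n)
    (hG : ∀ n, G (n+2) = c * G (n+1) - G n) :
    ∀ n, F n * G (n+1) - F (n+1) * G n = F 0 * G 1 - F 1 * G 0 := by
  intro n
  induction n with
  | zero => rfl
  | succ n ih => rw [hF n, hG n]; linear_combination ih

private lemma qrs_perprime (r : ℕ) (hr : r.Prime) (c : ℚ) (hc0 : c ≠ 0)
    (hvc0 : padicValRat r c < 0)
    (F G : ℕ → ℚ)
    (hF : ∀ n, F (n+2) = c * F (n+1) - F n)
    (hG : ∀ n, G (n+2) = c * G (n+1) - G n)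
    (hinit : F 0 * G 1 - F 1 * G 0 ≠ 0) :
    ∃ N, ∀ n ≥ N, ¬ ((r : ℤ) ∣ (F n).num ∧ (r : ℤ) ∣ (G n).num) := by
  haveI : Fact r.Prime := ⟨hr⟩
  have hW := qrs_wronskian c F G hF hG
  have hnzF : ∀ n, ¬ (F n = 0 ∧ F (n+1) = 0) := by
    rintro n ⟨h0, h1⟩
    exact hinit (by rw [← hW n, h0, h1]; ring)
  have hnzG : ∀ n, ¬ (G n = 0 ∧ G (n+1) = 0) := by
    rintro n ⟨h0, h1⟩
    exact hinit (by rw [← hW n, h0, h1]; ring)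
  by_cases hPF : ∃ n, QrsP r c F n
  · obtain ⟨n₀, hP⟩ := hPF
    obtain ⟨N, hN⟩ := qrs_eventually r c hc0 hvc0 F hF n₀ hP
    exact ⟨N, fun n hn hdv => hN n hn hdv.1⟩
  · by_cases hPG : ∃ n, QrsP r c G n
    · obtain ⟨n₀, hP⟩ := hPG
      obtain ⟨N, hN⟩ := qrs_eventually r c hc0 hvc0 G hG n₀ hP
      exact ⟨N, fun n hn hdv => hN n hn hdv.2⟩
    · exfalso
      push_neg at hPF hPG
      obtain ⟨hFne, hFgr⟩ := qrs_growth r c hvc0 F hPF hnzF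
      obtain ⟨hGne, hGgr⟩ := qrs_growth r c hvc0 G hPG hnzG
      set W := F 0 * G 1 - F 1 * G 0 with hWdef
      set u0 := padicValRat r (F 0)
      set w0 := padicValRat r (G 0)
      set n := (padicValRat r W - u0 - w0).toNat with hndef
      have hsum : F n * G (n+1) + (-(F (n+1) * G n)) = W := by
        rw [← hW n]; ring
      have ha : F n * G (n+1) ≠ 0 := mul_ne_zero (hFne n) (hGne (n+1))
      have hb : -(F (n+1) * G n) ≠ 0 :=
        neg_ne_zero.mpr (mul_ne_zero (hFne (n+1)) (hGne n))
      have hmin : min (padicValRat r (F n * G (n+1)))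
          (padicValRat r (-(F (n+1) * G n))) ≤ padicValRat r W := by
        rw [← hsum]
        exact padicValRat.min_le_padicValRat_add (by rw [hsum]; exact hinit)
      have hva : padicValRat r (F n * G (n+1)) =
          padicValRat r (F n) + padicValRat r (G (n+1)) :=
        padicValRat.mul (hFne n) (hGne (n+1))
      have hvb : padicValRat r (-(F (n+1) * G n)) =
          padicValRat r (F (n+1)) + padicValRat r (G n) := by
        rw [padicValRat.neg]; exact padicValRat.mul (hFne (n+1)) (hGne n)
      have h1 := hFgr n
      have h2 := hFgr (n+1)
      have h3 := hGgr n
      have h4 := hGgr (n+1)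
      have hcast : (padicValRat r W - u0 - w0) ≤ (n : ℤ) := Int.self_le_toNat _
      push_cast at h2 h4
      omega

private lemma qrs_exists_int (p q : ℕ) (hq : (q:ℚ) ≠ 0) (F : ℕ → ℚ)
    (hrec : ∀ n, F (n+2) = ((p:ℚ)/q) * F (n+1) - F n)
    (L : ℕ) (hL0 : (F 0).den ∣ L) (hL1 : (F 1).den ∣ L) :
    ∀ n, ∃ z : ℤ, ((L : ℚ) * q^n * F n = z ∧ (F n).num ∣ z) := by
  have den_mul : ∀ (x : ℚ) (m : ℕ), x.den ∣ m → ∃ z : ℤ, (m : ℚ) * x = z := by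
    intro x m hdvd
    obtain ⟨k, rfl⟩ := hdvd
    refine ⟨k * x.num, ?_⟩
    push_cast
    rw [mul_comm (x.den : ℚ) k, mul_assoc, qrs_den_cast_mul_self]
  have main : ∀ n, (∃ z : ℤ, (L : ℚ) * q^n * F n = z) ∧
      (∃ z : ℤ, (L : ℚ) * q^(n+1) * F (n+1) = z) := by
    intro n
    induction n with
    | zero =>
      constructor
      · obtain ⟨z, hz⟩ := den_mul (F 0) L hL0
        exact ⟨z, by rw [pow_zero, mul_one]; exact hz⟩
      · obtain ⟨z, hz⟩ := den_mul (F 1) (L * q) (hL1.mul_right q)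
        refine ⟨z, ?_⟩
        rw [pow_one, ← hz]
        push_cast
        ring
    | succ n ih =>
      obtain ⟨⟨z0, hz0⟩, ⟨z1, hz1⟩⟩ := ih
      refine ⟨⟨z1, hz1⟩, ⟨p * z1 - q^2 * z0, ?_⟩⟩
      rw [hrec n]
      push_cast
      rw [← hz0, ← hz1]
      field_simp
      ring
  intro n
  obtain ⟨z, hz⟩ := (main n).1
  refine ⟨z, hz, ?_⟩
  have hden : (z : ℚ) * (F n).den = (L : ℚ) * q^n * (F n).num := by
    rw [← hz]
    linear_combination ((L:ℚ) * q^n) * qrs_den_cast_mul_self (F n)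
  have hint : z * ((F n).den : ℤ) = (L : ℤ) * (q:ℤ)^n * (F n).num := by
    exact_mod_cast hden
  have hdvd : (F n).num ∣ z * ((F n).den : ℤ) := hint ▸ Dvd.intro_left _ rfl
  have hcop : IsCoprime ((F n).num) ((F n).den : ℤ) := by
    rw [Int.isCoprime_iff_gcd_eq_one]
    exact (F n).reduced
  exact hcop.dvd_of_dvd_mul_right hdvd

/-- For rational QRS(p/q,1) sequences `F, G` with `F_0 G_1 - F_1 G_0 ≠ 0`,
the sequence `gcd(f_n, g_n)` of gcds of the numerators is bounded. -/
theorem stmt_8 (p q : ℕ) (hp : 0 < p) (hq : 2 ≤ q) (hcop : Nat.Coprime p q)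
    (F G : ℕ → ℚ)
    (hrecF : ∀ n, F (n + 2) = ((p : ℚ) / q) * F (n + 1) - F n)
    (hrecG : ∀ n, G (n + 2) = ((p : ℚ) / q) * G (n + 1) - G n)
    (hinit : F 0 * G 1 - F 1 * G 0 ≠ 0) :
    ∃ C : ℕ, ∀ n, Int.gcd (F n).num (G n).num ≤ C := by
  have hq0 : q ≠ 0 := by omega
  have hqQ : (q : ℚ) ≠ 0 := by exact_mod_cast hq0
  have hpQ : (p : ℚ) ≠ 0 := by exact_mod_cast hp.ne'
  set c : ℚ := (p : ℚ) / q with hcdef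
  have hc0 : c ≠ 0 := div_ne_zero hpQ hqQ
  have hW := qrs_wronskian c F G hrecF hrecG
  -- integer scalings
  set L : ℕ := (F 0).den * (F 1).den * (G 0).den * (G 1).den with hLdef
  have hL : L ≠ 0 := by positivity
  have hzF := qrs_exists_int p q hqQ F hrecF L
    ⟨(F 1).den * (G 0).den * (G 1).den, by ring⟩
    ⟨(F 0).den * (G 0).den * (G 1).den, by ring⟩
  have hzG := qrs_exists_int p q hqQ G hrecG L
    ⟨(F 0).den * (F 1).den * (G 1).den, by ring⟩
    ⟨(F 0).den * (F 1).den * (G 0).den, by ring⟩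
  choose zF hzF hdF using hzF
  choose zG hzG hdG using hzG
  set K : ℤ := zF 0 * zG 1 - zF 1 * zG 0 with hKdef
  have hKQ : (K : ℚ) = (L:ℚ)^2 * q * (F 0 * G 1 - F 1 * G 0) := by
    rw [hKdef]
    push_cast
    rw [← hzF 0, ← hzF 1, ← hzG 0, ← hzG 1]
    ring
  have hK0 : K ≠ 0 := by
    intro h
    apply hinit
    have hLQ : (L:ℚ) ≠ 0 := by exact_mod_cast hL
    have h2 : (L:ℚ)^2 * q * (F 0 * G 1 - F 1 * G 0) = 0 := by
      rw [← hKQ, h]; norm_num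
    have hLq : (L:ℚ)^2 * q ≠ 0 := mul_ne_zero (pow_ne_zero _ hLQ) hqQ
    exact (mul_eq_zero.mp h2).resolve_left hLq
  -- key integer identity
  have hKey : ∀ n, zF n * zG (n+1) - zF (n+1) * zG n = (q:ℤ)^(2*n) * K := by
    intro n
    have hQ : ((zF n * zG (n+1) - zF (n+1) * zG n : ℤ) : ℚ) = (q:ℚ)^(2*n) * (K:ℚ) := by
      push_cast
      rw [← hzF n, ← hzG (n+1), ← hzF (n+1), ← hzG n, hKQ, ← hW n]
      ring
    exact_mod_cast hQ
  -- per-prime eventual coprimality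
  have hprime : ∀ r : ℕ, ∃ N, ∀ n ≥ N, r.Prime → r ∣ q →
      ¬ ((r : ℤ) ∣ (F n).num ∧ (r : ℤ) ∣ (G n).num) := by
    intro r
    by_cases hr : r.Prime ∧ r ∣ q
    · obtain ⟨hrp, hrq⟩ := hr
      haveI : Fact r.Prime := ⟨hrp⟩
      have hrp' : ¬ r ∣ p := by
        intro hdp
        have : r ∣ Nat.gcd p q := Nat.dvd_gcd hdp hrq
        rw [hcop] at this
        exact hrp.one_lt.ne' (Nat.eq_one_of_dvd_one this)
      have hvp : padicValRat r p = 0 := by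
        rw [padicValRat.of_nat]
        simp [padicValNat.eq_zero_of_not_dvd hrp']
      have hvq : 1 ≤ padicValRat r q := by
        rw [padicValRat.of_nat]
        exact_mod_cast one_le_padicValNat_of_dvd (by omega) hrq
      have hvc : padicValRat r c < 0 := by
        rw [hcdef, padicValRat.div hpQ hqQ, hvp]
        omega
      obtain ⟨N, hN⟩ := qrs_perprime r hrp c hc0 hvc F G hrecF hrecG hinit
      exact ⟨N, fun n hn _ _ => hN n hn⟩
    · exact ⟨0, fun n _ h1 h2 => absurd ⟨h1, h2⟩ hr⟩
  choose NN hNN using hprime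
  set N : ℕ := q.primeFactors.sup NN with hNdef
  -- for n ≥ N, gcd of numerators divides K
  have hbound : ∀ n ≥ N, Int.gcd (F n).num (G n).num ≤ K.natAbs := by
    intro n hn
    set d : ℕ := Int.gcd (F n).num (G n).num with hddef
    have hdF' : (d : ℤ) ∣ zF n := (Int.gcd_dvd_left _ _).trans (hdF n)
    have hdG' : (d : ℤ) ∣ zG n := (Int.gcd_dvd_right _ _).trans (hdG n)
    have hdvdK : (d : ℤ) ∣ (q:ℤ)^(2*n) * K := by
      rw [← hKey n]
      exact dvd_sub (Dvd.dvd.mul_right hdF' _) (Dvd.dvd.mul_left hdG' _)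
    have hcopdq : Nat.Coprime d q := by
      by_contra hcon
      obtain ⟨r, hrp, hrd⟩ := Nat.exists_prime_and_dvd hcon
      have hrdn : r ∣ d := hrd.trans (Nat.gcd_dvd_left _ _)
      have hrq : r ∣ q := hrd.trans (Nat.gcd_dvd_right _ _)
      have hrN : NN r ≤ N :=
        Finset.le_sup (Nat.mem_primeFactors.mpr ⟨hrp, hrq, hq0⟩)
      have hrF : (r : ℤ) ∣ (F n).num :=
        (Int.natCast_dvd_natCast.mpr hrdn).trans (Int.gcd_dvd_left _ _)
      have hrG : (r : ℤ) ∣ (G n).num :=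
        (Int.natCast_dvd_natCast.mpr hrdn).trans (Int.gcd_dvd_right _ _)
      exact hNN r n (le_trans hrN hn) hrp hrq ⟨hrF, hrG⟩
    have hcopZ : IsCoprime ((d : ℤ)) ((q:ℤ)^(2*n)) := by
      rw [show ((q:ℤ)^(2*n)) = ((q^(2*n) : ℕ) : ℤ) by push_cast; ring]
      exact Nat.isCoprime_iff_coprime.mpr (hcopdq.pow_right _)
    have hdK : (d : ℤ) ∣ K := hcopZ.dvd_of_dvd_mul_right (by rwa [mul_comm] at hdvdK)
    have hdKn : d ∣ K.natAbs := by
      have := Int.natAbs_dvd_natAbs.mpr hdK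
      simpa using this
    exact Nat.le_of_dvd (Int.natAbs_pos.mpr hK0) hdKn
  refine ⟨max K.natAbs ((Finset.range N).sup
    (fun n => Int.gcd (F n).num (G n).num)), fun n => ?_⟩
  rcases le_or_gt N n with h | h
  · exact le_max_of_le_left (hbound n h)
  · exact le_max_of_le_right (Finset.le_sup (f := fun n => Int.gcd (F n).num (G n).num) (Finset.mem_range.mpr h))
end

section
/- Let s, t be nonzero rationals and define Φ : ℤ² → ℤ² (after clearing denominators, ℚ²) by Φ(k,l) = (skl + k, tkl + l). Then Φ is at most 2-to-1: if Φ(k,l) = Φ(k',l') with (k,l) ≠ (k',l'), then k' = -(sl+1)/t. -/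
/-- The map `Φ(k,l) = (skl + k, tkl + l)` (with `s, t` nonzero rationals)
is at most 2-to-1: if `Φ(k,l) = Φ(k',l')` with `(k,l) ≠ (k',l')`, then
`k' = -(sl+1)/t`. -/
theorem stmt_11 (s t : ℚ) (hs : s ≠ 0) (ht : t ≠ 0) (k l k' l' : ℤ)
    (h1 : s * k * l + k = s * k' * l' + k')
    (h2 : t * k * l + l = t * k' * l' + l')
    (hne : (k, l) ≠ (k', l')) :
    (k' : ℚ) = -(s * l + 1) / t := by
  have hk : k ≠ k' := by
    rintro rfl
    apply hne
    have hl : (l : ℚ) = l' := by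
      rcases eq_or_ne (k : ℚ) 0 with hk0 | hk0
      · linear_combination h2 - t * ((l : ℚ) - l') * hk0
      · have : s * (k : ℚ) * ((l : ℚ) - l') = 0 := by linear_combination h1
        have := mul_eq_zero.mp this
        rcases this with h | h
        · exact absurd h (mul_ne_zero hs hk0)
        · linarith
    have : l = l' := by exact_mod_cast hl
    simp [this]
  have hc : (t : ℚ) * k - s * l = t * k' - s * l' := by
    linear_combination t * h1 - s * h2
  have key : ((k' : ℚ) - k) * (t * ((k' : ℚ) + k) + 1 - (t * k - s * l)) = 0 := by
    linear_combination (-1 : ℚ) * h1 - (k' : ℚ) * hc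
  have hkk : ((k' : ℚ) - k) ≠ 0 := by
    intro h
    apply hk
    have : (k : ℚ) = k' := by linarith
    exact_mod_cast this
  have h3 : t * ((k' : ℚ) + k) + 1 - (t * k - s * l) = 0 :=
    (mul_eq_zero.mp key).resolve_left hkk
  field_simp
  linarith
end

section
/- Let Γ be a subgroup of SL(2,ℝ) contained in the upper triangular matrices, such that the set of traces of elements of Γ is discrete in ℝ. Then D(Γ) = { τ ∈ ℝ* : there exists t with [[τ, t],[0, 1/τ]] ∈ Γ } is a discrete subgroup of the multiplicative group ℝ*. -/
open Topology Filter


/-- If `Γ ≤ SL(2,ℝ)` consists of upper triangular matrices and its trace set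
is discrete in `ℝ`, then the set `D(Γ)` of upper-left diagonal entries is a
discrete subgroup of the multiplicative group `ℝ*`. -/
theorem stmt_12 (Γ : Subgroup (Matrix.SpecialLinearGroup (Fin 2) ℝ))
    (htri : ∀ A ∈ Γ, (A : Matrix (Fin 2) (Fin 2) ℝ) 1 0 = 0)
    (hdisc : DiscreteTopology
      ↥{x : ℝ | ∃ A ∈ Γ, Matrix.trace (A : Matrix (Fin 2) (Fin 2) ℝ) = x}) :
    (1 ∈ {τ : ℝ | ∃ A ∈ Γ, (A : Matrix (Fin 2) (Fin 2) ℝ) 0 0 = τ}) ∧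
    (∀ σ ∈ {τ : ℝ | ∃ A ∈ Γ, (A : Matrix (Fin 2) (Fin 2) ℝ) 0 0 = τ},
      ∀ σ' ∈ {τ : ℝ | ∃ A ∈ Γ, (A : Matrix (Fin 2) (Fin 2) ℝ) 0 0 = τ},
        σ * σ' ∈ {τ : ℝ | ∃ A ∈ Γ, (A : Matrix (Fin 2) (Fin 2) ℝ) 0 0 = τ}) ∧
    (∀ σ ∈ {τ : ℝ | ∃ A ∈ Γ, (A : Matrix (Fin 2) (Fin 2) ℝ) 0 0 = τ},
      σ⁻¹ ∈ {τ : ℝ | ∃ A ∈ Γ, (A : Matrix (Fin 2) (Fin 2) ℝ) 0 0 = τ}) ∧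
    DiscreteTopology ↥{τ : ℝ | ∃ A ∈ Γ, (A : Matrix (Fin 2) (Fin 2) ℝ) 0 0 = τ} := by
  set D : Set ℝ := {τ : ℝ | ∃ A ∈ Γ, (A : Matrix (Fin 2) (Fin 2) ℝ) 0 0 = τ} with hD
  set S : Set ℝ := {x : ℝ | ∃ A ∈ Γ, Matrix.trace (A : Matrix (Fin 2) (Fin 2) ℝ) = x} with hS
  -- basic facts about members of Γ
  have hdet : ∀ A ∈ Γ, (A : Matrix (Fin 2) (Fin 2) ℝ) 0 0 *
      (A : Matrix (Fin 2) (Fin 2) ℝ) 1 1 = 1 := by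
    intro A hA
    have h := A.property
    rw [Matrix.det_fin_two] at h
    rw [htri A hA] at h
    linarith
  have hne : ∀ τ ∈ D, τ ≠ 0 := by
    rintro τ ⟨A, hA, rfl⟩ h0
    have := hdet A hA
    rw [h0, zero_mul] at this
    exact zero_ne_one this
  have hinv : ∀ τ ∈ D, τ⁻¹ ∈ D := by
    rintro τ ⟨A, hA, rfl⟩
    refine ⟨A⁻¹, Γ.inv_mem hA, ?_⟩
    have : ((A⁻¹ : Matrix.SpecialLinearGroup (Fin 2) ℝ) : Matrix (Fin 2) (Fin 2) ℝ) =
        Matrix.adjugate (A : Matrix (Fin 2) (Fin 2) ℝ) := Matrix.SpecialLinearGroup.coe_inv A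
    rw [this, Matrix.adjugate_fin_two]
    show (A : Matrix (Fin 2) (Fin 2) ℝ) 1 1 = _
    exact eq_inv_of_mul_eq_one_right (hdet A hA)
  have htr : ∀ τ ∈ D, τ + τ⁻¹ ∈ S := by
    rintro τ ⟨A, hA, rfl⟩
    refine ⟨A, hA, ?_⟩
    rw [Matrix.trace_fin_two]
    congr 1
    exact eq_inv_of_mul_eq_one_right (hdet A hA)
  refine ⟨⟨1, Γ.one_mem, rfl⟩, ?_, hinv, ?_⟩
  · rintro σ ⟨A, hA, rfl⟩ σ' ⟨B, hB, rfl⟩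
    refine ⟨A * B, Γ.mul_mem hA hB, ?_⟩
    have : ((A * B : Matrix.SpecialLinearGroup (Fin 2) ℝ) : Matrix (Fin 2) (Fin 2) ℝ) =
        (A : Matrix (Fin 2) (Fin 2) ℝ) * (B : Matrix (Fin 2) (Fin 2) ℝ) := rfl
    rw [this, Matrix.mul_apply, Fin.sum_univ_two, htri B hB, mul_zero, add_zero]
  · -- discreteness
    rw [discreteTopology_subtype_iff] at hdisc ⊢
    intro τ hτ
    have hτ0 : τ ≠ 0 := hne τ hτ
    have hStr := hdisc (τ + τ⁻¹) (htr τ hτ)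
    rw [Filter.inf_principal_eq_bot] at hStr ⊢
    -- get an open set V around τ + τ⁻¹ isolating it in S
    rw [mem_nhdsWithin_iff_exists_mem_nhds_inter] at hStr
    obtain ⟨V, hVmem, hVsub⟩ := hStr
    -- f is continuous at τ
    have hf : ContinuousAt (fun y : ℝ => y + y⁻¹) τ :=
      continuousAt_id.add (continuousAt_inv₀ hτ0)
    have hU1 : (fun y : ℝ => y + y⁻¹) ⁻¹' V ∈ 𝓝 τ := hf hVmem
    have hU2 : {y : ℝ | y = τ ∨ y ≠ τ⁻¹} ∈ 𝓝 τ := by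
      by_cases h : τ = τ⁻¹
      · filter_upwards with y
        by_cases hy : y = τ
        · exact Or.inl hy
        · exact Or.inr (fun hy' => hy (hy'.trans h.symm))
      · have : IsOpen {y : ℝ | y ≠ τ⁻¹} := isOpen_ne
        exact Filter.mem_of_superset (this.mem_nhds h) (fun y hy => Or.inr hy)
    rw [mem_nhdsWithin_iff_exists_mem_nhds_inter]
    refine ⟨(fun y : ℝ => y + y⁻¹) ⁻¹' V ∩ {y : ℝ | y = τ ∨ y ≠ τ⁻¹},
      Filter.inter_mem hU1 hU2, ?_⟩
    rintro y ⟨⟨hy1, hy2⟩, hy3⟩ hyD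
    -- y ∈ D, y + y⁻¹ ∈ V ∩ S so y + y⁻¹ = τ + τ⁻¹
    have hy0 : y ≠ 0 := hne y hyD
    have heq : y + y⁻¹ = τ + τ⁻¹ := by
      by_contra h
      exact hVsub ⟨hy1, h⟩ (htr y hyD)
    -- hence y = τ or y = τ⁻¹
    have hroots : y = τ ∨ y = τ⁻¹ := by
      have h1 : (y - τ) * (y - τ⁻¹) = 0 := by
        have h2 : y * (y + y⁻¹) = y * (τ + τ⁻¹) := by rw [heq]
        field_simp at h2 ⊢
        ring_nf
        ring_nf at h2
        nlinarith [h2]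
      rcases mul_eq_zero.mp h1 with h | h
      · exact Or.inl (by linarith)
      · exact Or.inr (by linarith)
    have hy3' : y ∈ ({τ} : Set ℝ)ᶜ := hy3
    rcases hroots with h | h
    · exact hy3' h
    · rcases hy2 with h' | h'
      · exact hy3' h'
      · exact h' h
end

section
/- Let Γ ≤ SL(2,ℝ) contain E = [[1,1],[0,1]] and F = [[1,0],[β²,1]] for some real β ≠ 0, and suppose every element A = [[a,b],[c,d]] ∈ Γ has a + d ∈ ℤ. Then β² ∈ ℤ, and moreover for every A = [[a,b],[c,d]] ∈ Γ: c ∈ ℤ, β²b ∈ ℤ, β²d ∈ ℤ, and β²a ∈ ℤ. -/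
/-- If `Γ ≤ SL(2,ℝ)` contains `E = [[1,1],[0,1]]` and `F = [[1,0],[β²,1]]`
(`β ≠ 0`), and every element of `Γ` has integer trace, then `β² ∈ ℤ` and for
each `A = [[a,b],[c,d]] ∈ Γ` one has `c, β²b, β²d, β²a ∈ ℤ`. -/
theorem stmt_13 (Γ : Subgroup (Matrix.SpecialLinearGroup (Fin 2) ℝ))
    (β : ℝ) (hβ : β ≠ 0)
    (hE : (⟨!![1, 1; 0, 1], by norm_num [Matrix.det_fin_two_of]⟩ :
      Matrix.SpecialLinearGroup (Fin 2) ℝ) ∈ Γ)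
    (hF : (⟨!![1, 0; β ^ 2, 1], by norm_num [Matrix.det_fin_two_of]⟩ :
      Matrix.SpecialLinearGroup (Fin 2) ℝ) ∈ Γ)
    (htr : ∀ A ∈ Γ, ∃ m : ℤ,
      (A : Matrix (Fin 2) (Fin 2) ℝ) 0 0 + (A : Matrix (Fin 2) (Fin 2) ℝ) 1 1 = m) :
    (∃ m : ℤ, β ^ 2 = m) ∧
    ∀ A ∈ Γ,
      (∃ m : ℤ, (A : Matrix (Fin 2) (Fin 2) ℝ) 1 0 = m) ∧
      (∃ m : ℤ, β ^ 2 * (A : Matrix (Fin 2) (Fin 2) ℝ) 0 1 = m) ∧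
      (∃ m : ℤ, β ^ 2 * (A : Matrix (Fin 2) (Fin 2) ℝ) 1 1 = m) ∧
      (∃ m : ℤ, β ^ 2 * (A : Matrix (Fin 2) (Fin 2) ℝ) 0 0 = m) := by
  set E : Matrix.SpecialLinearGroup (Fin 2) ℝ :=
    ⟨!![1, 1; 0, 1], by norm_num [Matrix.det_fin_two_of]⟩ with hEdef
  set F : Matrix.SpecialLinearGroup (Fin 2) ℝ :=
    ⟨!![1, 0; β ^ 2, 1], by norm_num [Matrix.det_fin_two_of]⟩ with hFdef
  -- c-entry of any element is an integer
  have hc : ∀ A ∈ Γ, ∃ m : ℤ, (A : Matrix (Fin 2) (Fin 2) ℝ) 1 0 = m := by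
    intro A hA
    obtain ⟨m, hm⟩ := htr A hA
    obtain ⟨n, hn⟩ := htr (A * E) (Γ.mul_mem hA hE)
    refine ⟨n - m, ?_⟩
    simp only [Matrix.SpecialLinearGroup.coe_mul, Matrix.mul_apply,
      Fin.sum_univ_two, hEdef] at hn
    push_cast
    change ((A : Matrix (Fin 2) (Fin 2) ℝ) * (!![1, 1; 0, 1] : Matrix (Fin 2) (Fin 2) ℝ)) 0 0 + ((A : Matrix (Fin 2) (Fin 2) ℝ) * (!![1, 1; 0, 1] : Matrix (Fin 2) (Fin 2) ℝ)) 1 1 = n at hn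
    simp [Matrix.mul_apply, Fin.sum_univ_two] at hn
    linarith
  -- β² * (b-entry) is an integer
  have hb : ∀ A ∈ Γ, ∃ m : ℤ, β ^ 2 * (A : Matrix (Fin 2) (Fin 2) ℝ) 0 1 = m := by
    intro A hA
    obtain ⟨m, hm⟩ := htr A hA
    obtain ⟨n, hn⟩ := htr (A * F) (Γ.mul_mem hA hF)
    refine ⟨n - m, ?_⟩
    simp only [Matrix.SpecialLinearGroup.coe_mul, Matrix.mul_apply,
      Fin.sum_univ_two, hFdef] at hn
    push_cast
    change ((A : Matrix (Fin 2) (Fin 2) ℝ) * (!![1, 0; β ^ 2, 1] : Matrix (Fin 2) (Fin 2) ℝ)) 0 0 + ((A : Matrix (Fin 2) (Fin 2) ℝ) * (!![1, 0; β ^ 2, 1] : Matrix (Fin 2) (Fin 2) ℝ)) 1 1 = n at hn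
    simp [Matrix.mul_apply, Fin.sum_univ_two] at hn
    linarith
  have hN : ∃ m : ℤ, β ^ 2 = m := by
    obtain ⟨m, hm⟩ := hc F hF
    exact ⟨m, by simpa [hFdef] using hm⟩
  refine ⟨hN, fun A hA => ?_⟩
  obtain ⟨m1, h1⟩ := hb A hA
  obtain ⟨m2, h2⟩ := hb (E * A) (Γ.mul_mem hE hA)
  obtain ⟨m3, h3⟩ := hb (A * E) (Γ.mul_mem hA hE)
  simp only [Matrix.SpecialLinearGroup.coe_mul, Matrix.mul_apply,
    Fin.sum_univ_two, hEdef] at h2 h3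
  change β ^ 2 * ((!![1, 1; 0, 1] : Matrix (Fin 2) (Fin 2) ℝ) * (A : Matrix (Fin 2) (Fin 2) ℝ)) 0 1 = m2 at h2
  change β ^ 2 * ((A : Matrix (Fin 2) (Fin 2) ℝ) * (!![1, 1; 0, 1] : Matrix (Fin 2) (Fin 2) ℝ)) 0 1 = m3 at h3
  simp [Matrix.mul_apply, Fin.sum_univ_two] at h2 h3
  refine ⟨hc A hA, ⟨m1, h1⟩, ⟨m2 - m1, ?_⟩, ⟨m3 - m1, ?_⟩⟩
  · push_cast; linarith [mul_add (β ^ 2) ((A : Matrix (Fin 2) (Fin 2) ℝ) 0 1)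
      ((A : Matrix (Fin 2) (Fin 2) ℝ) 1 1)]
  · push_cast; linarith [mul_add (β ^ 2) ((A : Matrix (Fin 2) (Fin 2) ℝ) 0 0)
      ((A : Matrix (Fin 2) (Fin 2) ℝ) 0 1)]
end

section
/- Let A = √D · B where D is a squarefree positive integer, B = [[b₁,b₂],[b₃,b₄]] ∈ M₂(ℚ), and det A = 1 (so b₁b₄ − b₂b₃ = 1/D). Suppose D·b₃² ∈ ℤ, D·N²·b₁² ∈ ℤ, D·N²·b₄² ∈ ℤ, and D·N²·b₂² ∈ ℤ for a positive integer N. Then b₃ ∈ ℤ, Nb₁ ∈ ℤ, Nb₄ ∈ ℤ, Nb₂ ∈ ℤ, and the denominator of 1/D = b₁b₄ − b₂b₃ divides N², so D divides N². -/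
/-- Key lemma: if `D` is squarefree and `D·x² ∈ ℤ`, then `x ∈ ℤ`. -/
lemma sqfree_int_of_mul_sq (D : ℕ) (hD : Squarefree D) (x : ℚ) (m : ℤ)
    (h : (D : ℚ) * x ^ 2 = m) : ∃ k : ℤ, x = k := by
  have hx : (D : ℤ) * x.num ^ 2 = m * (x.den : ℤ) ^ 2 := by
    have hden : (x.den : ℚ) ≠ 0 := by exact_mod_cast x.den_nz
    have hx' : (D : ℚ) * (x.num : ℚ) ^ 2 = (m : ℚ) * (x.den : ℚ) ^ 2 := by
      have := Rat.num_div_den x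
      rw [← this] at h
      field_simp at h
      linarith [h]
    exact_mod_cast hx'
  have hdvd : (x.den : ℤ) ^ 2 ∣ (D : ℤ) * x.num ^ 2 := ⟨m, by linarith [hx]⟩
  have hcop : IsCoprime ((x.den : ℤ) ^ 2) (x.num ^ 2) := by
    apply IsCoprime.pow
    exact Int.isCoprime_iff_gcd_eq_one.mpr (by simpa [Int.gcd, Nat.Coprime, Nat.gcd_comm] using x.reduced)
  have hdvdD : (x.den : ℤ) ^ 2 ∣ (D : ℤ) := hcop.dvd_of_dvd_mul_right hdvd
  have hdvdD' : x.den ^ 2 ∣ D := by exact_mod_cast hdvdD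
  have hunit := hD x.den (by rwa [sq] at hdvdD')
  have hden1 : x.den = 1 := Nat.isUnit_iff.mp hunit
  exact ⟨x.num, by rw [← Rat.num_div_den x, hden1]; simp⟩

/-- If `D` is a squarefree positive integer, `b₁b₄ - b₂b₃ = 1/D`, and
`D·b₃², D·N²·b₁², D·N²·b₄², D·N²·b₂²` are integers, then `b₃, Nb₁, Nb₄, Nb₂`
are integers, the denominator of `1/D` divides `N²`, and `D ∣ N²`. -/
theorem stmt_19 (D N : ℕ) (hD : Squarefree D) (hDpos : 0 < D) (hN : 0 < N)
    (b₁ b₂ b₃ b₄ : ℚ) (hdet : b₁ * b₄ - b₂ * b₃ = 1 / D)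
    (h3 : ∃ m : ℤ, (D : ℚ) * b₃ ^ 2 = m)
    (h1 : ∃ m : ℤ, (D : ℚ) * N ^ 2 * b₁ ^ 2 = m)
    (h4 : ∃ m : ℤ, (D : ℚ) * N ^ 2 * b₄ ^ 2 = m)
    (h2 : ∃ m : ℤ, (D : ℚ) * N ^ 2 * b₂ ^ 2 = m) :
    (∃ m : ℤ, b₃ = m) ∧ (∃ m : ℤ, (N : ℚ) * b₁ = m) ∧
    (∃ m : ℤ, (N : ℚ) * b₄ = m) ∧ (∃ m : ℤ, (N : ℚ) * b₂ = m) ∧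
    ((1 / D : ℚ).den ∣ N ^ 2) ∧ (D ∣ N ^ 2) := by
  obtain ⟨m3, hm3⟩ := h3
  obtain ⟨k3, hk3⟩ := sqfree_int_of_mul_sq D hD b₃ m3 hm3
  obtain ⟨m1, hm1⟩ := h1
  obtain ⟨k1, hk1⟩ := sqfree_int_of_mul_sq D hD ((N : ℚ) * b₁) m1 (by push_cast; ring_nf; ring_nf at hm1; linarith)
  obtain ⟨m4, hm4⟩ := h4
  obtain ⟨k4, hk4⟩ := sqfree_int_of_mul_sq D hD ((N : ℚ) * b₄) m4 (by push_cast; ring_nf; ring_nf at hm4; linarith)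
  obtain ⟨m2, hm2⟩ := h2
  obtain ⟨k2, hk2⟩ := sqfree_int_of_mul_sq D hD ((N : ℚ) * b₂) m2 (by push_cast; ring_nf; ring_nf at hm2; linarith)
  have hDQ : (D : ℚ) ≠ 0 := by positivity
  have hND : ((N ^ 2 : ℤ) : ℚ) = (D : ℚ) * ((k1 * k4 - k2 * k3 * N : ℤ) : ℚ) := by
    push_cast
    have : (N : ℚ) ^ 2 * (b₁ * b₄ - b₂ * b₃) = (N : ℚ) ^ 2 * (1 / D) := by rw [hdet]
    have hN2 : (N : ℚ) ^ 2 * (1 / D) * D = N ^ 2 := by field_simp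
    have e1 : (N:ℚ)^2 * (b₁*b₄) = (k1:ℚ)*k4 := by rw [← hk1, ← hk4]; ring
    have e2 : (N:ℚ)^2 * (b₂*b₃) = (k2:ℚ)*k3*N := by rw [← hk2, hk3]; ring
    nlinarith [this, hN2, e1, e2]
  have hDdvd : (D : ℤ) ∣ (N : ℤ) ^ 2 := ⟨k1 * k4 - k2 * k3 * N, by exact_mod_cast hND⟩
  have hDdvd' : D ∣ N ^ 2 := by exact_mod_cast hDdvd
  refine ⟨⟨k3, hk3⟩, ⟨k1, hk1⟩, ⟨k4, hk4⟩, ⟨k2, hk2⟩, ?_, hDdvd'⟩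
  have : (1 / D : ℚ).den = D := by
    rw [one_div]
    rw [Rat.inv_natCast_den_of_pos hDpos]
  rw [this]; exact hDdvd'
end
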